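/- arXiv:1307.0364 — 3 statements merged into one kernel-verified Lean document; each statement's English description precedes it below -/
import Mathlib

section
/- Fix integers m ≥ 1 and l, and define σχ^l_{h,s}(x,y) = conj(χ^l_{h,s}(y,x)). Then for all h, h' ∈ ℤ/mℤ, all s, s' ∈ {0,1,…,m−1}, and all x, y ∈ ℤ/mℤ: Σ_{x₁ ∈ ℤ/mℤ} γ^l_y(x₁, x−x₁)·σχ^l_{h,s}(x₁,y)·σχ^l_{h',s'}(x−x₁,y) equals m·σχ^l_{h,s}(x,y) if (h,s) = (h',s'), and equals 0 otherwise. (This is the fusion rule mul(S⁻¹χ_ρ ⊗ S⁻¹χ_{ρ'}) = δ_{ρ,ρ'}·(#Γ/dim χ_ρ)·S⁻¹χ_ρ for Γ = ℤ/mℤ, where all irreducible characters have dimension 1.) -/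
/-!
On the diagonal `y = h = h'` the function `x ↦ σχ^l_{y,s}(x, y)` is `x̃ ↦ ζ_{m²}^{-(l ỹ + m s) x̃}`,
a character of `ℤ` restricted to `{0, …, m-1}`. Carrying `x̃₁ + x̃₂ = m q + (x₁ + x₂)~` through it
produces the factor `ζ_m^{-l ỹ q}` (using `ζ_{m²}^m = ζ_m` and `ζ_m^m = 1`), which is exactly cancelled
by `γ^l_y(x₁, x₂) = ζ_m^{l ỹ q}`. So `σχ^l_{y,s}(·, y)` is a `γ^l_y`-projective character, and
`σχ^l_{y,s} = σχ^l_{y,s'} · ζ_m^{(s'-s) x̃}`; the sum then collapses to `σχ^l_{y,s'}(x, y)` times a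
geometric sum of `m`-th roots of unity, which is `m` or `0` according as `m ∣ s' - s`.
Off the diagonal every summand vanishes.
-/

/-- `ζ_n = exp(2πi/n)`. -/
noncomputable def zetaC (n : ℕ) : ℂ := Complex.exp (2 * Real.pi * Complex.I / n)

/-- The 3-cocycle `ω_l(x,y,z) = ζ_m^{l·x̃·⌊(ỹ+z̃)/m⌋}` on `ℤ/mℤ`. -/
noncomputable def omegaL (m : ℕ) (l : ℤ) (x y z : ZMod m) : ℂ :=
  zetaC m ^ (l * (x.val : ℤ) * (((y.val + z.val) / m : ℕ) : ℤ))

/-- `γ^l_h(x,y) = ω_l(h,x,y)·ω_l(x,y,h)/ω_l(x,h,y)`. -/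
noncomputable def gammaL (m : ℕ) (l : ℤ) (h x y : ZMod m) : ℂ :=
  omegaL m l h x y * omegaL m l x y h / omegaL m l x h y

/-- The irreducible character `χ^l_{h,s}` of the twisted quantum double `D^{ω_l}(ℤ/mℤ)`. -/
noncomputable def chiL (m : ℕ) (l : ℤ) (h : ZMod m) (s : ℤ) (x y : ZMod m) : ℂ :=
  if x = h then zetaC (m ^ 2) ^ ((l * (h.val : ℤ) + m * s) * (y.val : ℤ)) else 0

/-- `σχ^l_{h,s}(x,y) = conj(χ^l_{h,s}(y,x))`, the `S⁻¹`-transform of `χ^l_{h,s}`. -/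
noncomputable def sigmaChiL (m : ℕ) (l : ℤ) (h : ZMod m) (s : ℤ) (x y : ZMod m) : ℂ :=
  (starRingEnd ℂ) (chiL m l h s y x)

lemma IsPrimitiveRoot.sum_range_zpow_mul_eq_ite {K : Type*} [Field K] {ζ : K} {m : ℕ}
    (hζ : IsPrimitiveRoot ζ m) (k : ℤ) :
    ∑ i ∈ Finset.range m, ζ ^ (k * i) = if (m : ℤ) ∣ k then (m : K) else 0 := by
  simp_rw [zpow_mul, zpow_natCast]
  split_ifs with hk
  · simp [(hζ.zpow_eq_one_iff_dvd k).mpr hk]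
  · have hne : ζ ^ k ≠ 1 := mt (hζ.zpow_eq_one_iff_dvd k).mp hk
    rw [geom_sum_eq hne, ← zpow_natCast, ← zpow_mul, mul_comm, zpow_mul,
      zpow_natCast, hζ.pow_eq_one, one_zpow, sub_self, zero_div]

lemma ZMod.sum_comp_val {M : Type*} [AddCommMonoid M] (m : ℕ) [NeZero m] (f : ℕ → M) :
    ∑ a : ZMod m, f a.val = ∑ i ∈ Finset.range m, f i := by
  obtain ⟨n, rfl⟩ := Nat.exists_eq_succ_of_ne_zero (NeZero.ne m)
  exact Fin.sum_univ_eq_sum_range f (n + 1)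

lemma zetaC_isPrimitiveRoot (n : ℕ) [NeZero n] : IsPrimitiveRoot (zetaC n) n :=
  Complex.isPrimitiveRoot_exp n (NeZero.ne n)

lemma zetaC_ne_zero (n : ℕ) : zetaC n ≠ 0 := Complex.exp_ne_zero _

lemma zetaC_zpow_add_mul_self (n : ℕ) [NeZero n] (a k : ℤ) :
    zetaC n ^ (a + n * k) = zetaC n ^ a := by
  rw [zpow_add₀ (zetaC_ne_zero n), zpow_mul, zpow_natCast, (zetaC_isPrimitiveRoot n).pow_eq_one,
    one_zpow, mul_one]

lemma zetaC_sq_zpow_self_mul (m : ℕ) [NeZero m] (k : ℤ) :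
    zetaC (m ^ 2) ^ ((m : ℤ) * k) = zetaC m ^ k := by
  have hm : (m : ℂ) ≠ 0 := Nat.cast_ne_zero.mpr (NeZero.ne m)
  rw [zpow_mul, zpow_natCast, zetaC, zetaC, ← Complex.exp_nat_mul]
  congr 2
  push_cast
  field_simp

lemma conj_zetaC_zpow (n : ℕ) (k : ℤ) : (starRingEnd ℂ) (zetaC n ^ k) = zetaC n ^ (-k) := by
  rw [map_zpow₀, zpow_neg, ← inv_zpow, zetaC, ← Complex.exp_conj, ← Complex.exp_neg]
  congr 2
  simp only [map_div₀, map_mul, Complex.conj_I, Complex.conj_ofReal, Complex.conj_ofNat,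
    map_natCast]
  ring

section

variable (m : ℕ) (l : ℤ)

lemma gammaL_eq (y x₁ x₂ : ZMod m) :
    gammaL m l y x₁ x₂ = zetaC m ^ (l * y.val * (((x₁.val + x₂.val) / m : ℕ) : ℤ)) := by
  rw [gammaL, omegaL, omegaL, omegaL, Nat.add_comm x₂.val y.val, mul_div_assoc,
    div_self (zpow_ne_zero _ (zetaC_ne_zero m)), mul_one]

lemma sigmaChiL_self (h : ZMod m) (s : ℤ) (x : ZMod m) :
    sigmaChiL m l h s x h = zetaC (m ^ 2) ^ (-((l * h.val + m * s) * x.val)) := by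
  rw [sigmaChiL, chiL, if_pos rfl, conj_zetaC_zpow]

lemma sigmaChiL_of_ne {h y : ZMod m} (hy : y ≠ h) (s : ℤ) (x : ZMod m) :
    sigmaChiL m l h s x y = 0 := by
  rw [sigmaChiL, chiL, if_neg hy, map_zero]

variable [NeZero m]

lemma gammaL_mul_sigmaChiL_mul_sigmaChiL (y : ZMod m) (s : ℤ) (x₁ x₂ : ZMod m) :
    gammaL m l y x₁ x₂ * sigmaChiL m l y s x₁ y * sigmaChiL m l y s x₂ y =
      sigmaChiL m l y s (x₁ + x₂) y := by
  set q : ℕ := (x₁.val + x₂.val) / m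
  have hcarry : (x₁.val : ℤ) + x₂.val = m * q + (x₁ + x₂).val := by
    rw [ZMod.val_add]
    exact_mod_cast (Nat.div_add_mod _ m).symm
  rw [gammaL_eq, sigmaChiL_self, sigmaChiL_self, sigmaChiL_self,
    ← zetaC_sq_zpow_self_mul m (l * y.val * q), ← zpow_add₀ (zetaC_ne_zero _),
    ← zpow_add₀ (zetaC_ne_zero _), ← zetaC_zpow_add_mul_self (m ^ 2) _ (s * q)]
  congr 1
  push_cast
  linear_combination (-(l * y.val + m * s)) * hcarry

lemma sigmaChiL_self_eq_mul_zpow (y : ZMod m) (s s' : ℤ) (x : ZMod m) :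
    sigmaChiL m l y s x y = sigmaChiL m l y s' x y * zetaC m ^ ((s' - s) * x.val) := by
  rw [sigmaChiL_self, sigmaChiL_self, ← zetaC_sq_zpow_self_mul m ((s' - s) * x.val),
    ← zpow_add₀ (zetaC_ne_zero _)]
  ring_nf

lemma sum_zetaC_zpow_mul_val (k : ℤ) :
    ∑ a : ZMod m, zetaC m ^ (k * a.val) = if (m : ℤ) ∣ k then (m : ℂ) else 0 :=
  (ZMod.sum_comp_val m fun i => zetaC m ^ (k * i)).trans
    ((zetaC_isPrimitiveRoot m).sum_range_zpow_mul_eq_ite k)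

lemma sum_gammaL_mul_sigmaChiL_self (y : ZMod m) (s s' : ℤ) (x : ZMod m) :
    ∑ x₁ : ZMod m,
        gammaL m l y x₁ (x - x₁) * sigmaChiL m l y s x₁ y * sigmaChiL m l y s' (x - x₁) y =
      sigmaChiL m l y s' x y * if (m : ℤ) ∣ s' - s then (m : ℂ) else 0 := by
  rw [← sum_zetaC_zpow_mul_val, Finset.mul_sum]
  refine Finset.sum_congr rfl fun x₁ _ => ?_
  have hproj := gammaL_mul_sigmaChiL_mul_sigmaChiL m l y s' x₁ (x - x₁)
  rw [add_sub_cancel] at hproj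
  rw [sigmaChiL_self_eq_mul_zpow m l y s s', ← hproj]
  ring

end

theorem statement6 (m : ℕ) [NeZero m] (l : ℤ) (h h' : ZMod m) (s s' : ℤ)
    (hs : 0 ≤ s ∧ s < m) (hs' : 0 ≤ s' ∧ s' < m) (x y : ZMod m) :
    (∑ x₁ : ZMod m,
        gammaL m l y x₁ (x - x₁) * sigmaChiL m l h s x₁ y * sigmaChiL m l h' s' (x - x₁) y) =
      if h = h' ∧ s = s' then (m : ℂ) * sigmaChiL m l h s x y else 0 := by
  by_cases hy : y = h ∧ y = h'
  · obtain ⟨rfl, rfl⟩ := hy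
    have hdvd : (m : ℤ) ∣ s' - s ↔ s = s' := by
      refine ⟨fun hd => ?_, fun he => by simp [he]⟩
      have := Int.eq_zero_of_abs_lt_dvd hd (abs_lt.mpr ⟨by omega, by omega⟩)
      omega
    rw [sum_gammaL_mul_sigmaChiL_self]
    by_cases hss : s = s'
    · subst hss
      simp [mul_comm]
    · simp [hss, hdvd]
  · have hterm : ∀ x₁ : ZMod m, sigmaChiL m l h s x₁ y * sigmaChiL m l h' s' (x - x₁) y = 0 := by
      intro x₁
      rcases not_and_or.mp hy with hyh | hyh'
      · rw [sigmaChiL_of_ne m l hyh, zero_mul]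
      · rw [sigmaChiL_of_ne m l hyh', mul_zero]
    simp_rw [mul_assoc, hterm, mul_zero, Finset.sum_const_zero]
    split_ifs with hhs
    · rw [sigmaChiL_of_ne m l fun hyh => hy ⟨hyh, hyh.trans hhs.1⟩, mul_zero]
    · rfl
end

section
/- Let p be an odd prime, l, s, b integers, a an integer with p ∤ a, and c an integer with a·c ≡ 1 (mod p²). Then for every h ∈ ℤ/pℤ: η_{h,s}(a,b) = ζ_{p²}^{−(l·h̃ + p·s)·b·c·h̃}. (Here the sum defining η_{h,s}(a,b) has exactly one term, since a·z = h has a unique solution z ∈ ℤ/pℤ.) -/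
/-- `η_{h,s}(a,b) = Σ_{z ∈ ℤ/pℤ, a·z = h} ζ_{p²}^{l·a·b·z̃² − (2·l·h̃ + p·s)·b·z̃}`. -/
noncomputable def etaP (p : ℕ) [NeZero p] (l : ℤ) (h : ZMod p) (s a b : ℤ) : ℂ :=
  ∑ z : ZMod p,
    if a • z = h then
      zetaC (p ^ 2) ^
        (l * a * b * (z.val : ℤ) ^ 2 - (2 * l * (h.val : ℤ) + p * s) * b * (z.val : ℤ))
    else 0

lemma zetaC_pow_self (n : ℕ) (hn : n ≠ 0) : zetaC n ^ (n : ℤ) = 1 := by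
  have hn' : (n : ℂ) ≠ 0 := Nat.cast_ne_zero.mpr hn
  rw [zpow_natCast, zetaC, ← Complex.exp_nat_mul]
  rw [show (n : ℂ) * (2 * Real.pi * Complex.I / n) = 2 * Real.pi * Complex.I by
    field_simp]
  exact Complex.exp_two_pi_mul_I

lemma zetaC_zpow_congr (n : ℕ) (hn : n ≠ 0) {m m' : ℤ} (hmm : m ≡ m' [ZMOD (n : ℤ)]) :
    zetaC n ^ m = zetaC n ^ m' := by
  obtain ⟨k, hk⟩ := Int.modEq_iff_dvd.mp hmm
  have : m' = m + (n : ℤ) * k := by linarith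
  rw [this, zpow_add₀ (zetaC_ne_zero n), zpow_mul, zetaC_pow_self n hn, one_zpow, mul_one]

theorem statement12 (p : ℕ) [NeZero p] (hp : p.Prime) (hp2 : p ≠ 2) (l s b a c : ℤ)
    (ha : ¬ (p : ℤ) ∣ a) (hc : a * c ≡ 1 [ZMOD ((p : ℤ) ^ 2)]) (h : ZMod p) :
    etaP p l h s a b =
      zetaC (p ^ 2) ^ (-((l * (h.val : ℤ) + p * s) * b * c * (h.val : ℤ))) := by
  haveI := Fact.mk hp
  set z₀ : ZMod p := (c : ZMod p) * h with hz₀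
  have hcp : (a : ZMod p) * (c : ZMod p) = 1 := by
    have h1 : a * c ≡ 1 [ZMOD (p : ℤ)] := hc.of_dvd (dvd_pow_self _ two_ne_zero)
    have h2 := (ZMod.intCast_eq_intCast_iff _ _ _).mpr h1
    push_cast at h2
    simpa using h2
  have ha0 : (a : ZMod p) ≠ 0 := by
    rwa [Ne, ZMod.intCast_zmod_eq_zero_iff_dvd]
  have hz : ∀ z : ZMod p, a • z = h ↔ z = z₀ := by
    intro z
    rw [zsmul_eq_mul]
    constructor
    · intro hz'
      refine mul_left_cancel₀ ha0 ?_
      rw [hz', hz₀, ← mul_assoc, hcp, one_mul]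
    · rintro rfl
      rw [hz₀, ← mul_assoc, hcp, one_mul]
  rw [etaP]
  simp only [hz]
  rw [Finset.sum_ite_eq' Finset.univ z₀, if_pos (Finset.mem_univ z₀)]
  set H : ℤ := (h.val : ℤ) with hH
  set w : ℤ := (z₀.val : ℤ) with hw
  have hwz : ((w : ℤ) : ZMod p) = z₀ := by
    rw [hw]
    push_cast
    rw [ZMod.natCast_val, ZMod.cast_id]
  have hHz : ((H : ℤ) : ZMod p) = h := by
    rw [hH]
    push_cast
    rw [ZMod.natCast_val, ZMod.cast_id]
  have hwa : a * w ≡ H [ZMOD (p : ℤ)] := by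
    rw [← ZMod.intCast_eq_intCast_iff]
    push_cast
    rw [hwz, hHz, hz₀, ← mul_assoc, hcp, one_mul]
  obtain ⟨u, hu⟩ : ∃ u : ℤ, a * w = H + p * u := by
    obtain ⟨u, hu⟩ := Int.modEq_iff_dvd.mp hwa
    exact ⟨-u, by linarith⟩
  apply zetaC_zpow_congr _ (pow_ne_zero 2 hp.ne_zero)
  rw [← ZMod.intCast_eq_intCast_iff]
  have hE1 : ((a : ℤ) : ZMod (p ^ 2)) * ((c : ℤ) : ZMod (p ^ 2)) = 1 := by
    have h2 := (ZMod.intCast_eq_intCast_iff (a * c) 1 (p ^ 2)).mpr (by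
      push_cast
      exact hc)
    push_cast at h2
    simpa using h2
  have hE2 : ((a : ℤ) : ZMod (p ^ 2)) * ((w : ℤ) : ZMod (p ^ 2)) =
      ((H : ℤ) : ZMod (p ^ 2)) + ((p : ℕ) : ZMod (p ^ 2)) * ((u : ℤ) : ZMod (p ^ 2)) := by
    have := congrArg (fun t : ℤ => ((t : ZMod (p ^ 2)))) hu
    push_cast at this ⊢
    simpa using this
  have hE3 : (((p : ℕ) : ZMod (p ^ 2))) ^ 2 = 0 := by
    have h3 : ((p ^ 2 : ℕ) : ZMod (p ^ 2)) = 0 := ZMod.natCast_self _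
    push_cast at h3 ⊢
    simpa using h3
  push_cast
  linear_combination (((l : ZMod (p ^ 2)) * H + p * s) * b * w - p * u * b * l * w) * hE1 +
    (l : ZMod (p ^ 2)) * b * w * hE2 -
    (c : ZMod (p ^ 2)) * b * ((l : ZMod (p ^ 2)) * H - (l : ZMod (p ^ 2)) * p * u + p * s) * hE2 + (u : ZMod (p ^ 2)) * b * c * ((l : ZMod (p ^ 2)) * u - s) * hE3
end

section
/- Let p be an odd prime, l an integer, n ≥ 1, and (a_1,b_1),…,(a_n,b_n) pairs of integers with p ∤ a_j for all j; choose integers c_j with a_j·c_j ≡ 1 (mod p²), and set B = Σ_{j=1}^{n} b_j·c_j and T = Σ_{h ∈ ℤ/pℤ} Σ_{s=0}^{p−1} Π_{j=1}^{n} η_{h,s}(a_j,b_j). Then: (i) if p ∤ B, then T = p; (ii) if B = r·p for an integer r, then T = p · Σ_{k=0}^{p−1} ζ_p^{−l·r·k²} = p·S_p(−l·r). -/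
/-- The Gauss-type sum `S_p(A) = Σ_{k=0}^{p−1} ζ_p^{A·k²}`. -/
noncomputable def SP (p : ℕ) (A : ℤ) : ℂ := ∑ k ∈ Finset.range p, zetaC p ^ (A * (k : ℤ) ^ 2)

/-!
Since `p ∤ a`, the constraint `a·z = h` has the single solution `z = a⁻¹h`, so each `η_{h,s}(a, b)`
is a single root of unity. Completing the square with `a·c ≡ 1 (mod p²)`, its exponent is
`−(l·h̃² + p·s·h̃)·b·c` modulo `p²`; hence the product over `j` is
`ζ_{p²}^{−l·h̃²·B} · (ζ_p^{−h̃·B})^s`. Summing this geometric progression over `s` gives `p` when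
`p ∣ h̃·B` and `0` otherwise. If `p ∤ B` only `h = 0` survives; if `B = r·p` every `h` contributes
`p·ζ_p^{−l·r·h̃²}`, which sums to `p·S_p(−l·r)`.
-/

open Finset

lemma prod_zpow_eq_zpow_sum₀ {G : Type*} [CommGroupWithZero G] {x : G} (hx : x ≠ 0)
    {ι : Type*} (s : Finset ι) (f : ι → ℤ) :
    ∏ i ∈ s, x ^ f i = x ^ ∑ i ∈ s, f i := by
  induction s using Finset.cons_induction with
  | empty => simp
  | cons i s _ ih => rw [prod_cons, sum_cons, zpow_add₀ hx, ih]

/-- Completing the square: the exponent of `η_{h,s}(a,b)` at `z̃ = V`, where `a·V ≡ h̃ (mod m)`. -/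
lemma etaExponent_modEq {m a b c l s H V : ℤ} (hac : a * c ≡ 1 [ZMOD m ^ 2])
    (hV : a * V ≡ H [ZMOD m]) :
    l * a * b * V ^ 2 - (2 * l * H + m * s) * b * V ≡ -(l * H ^ 2 + m * s * H) * (b * c)
      [ZMOD m ^ 2] := by
  obtain ⟨x, hx⟩ := hac.symm.dvd
  obtain ⟨y, hy⟩ := hV.symm.dvd
  refine Int.modEq_iff_dvd.mpr
    ⟨-(l * b * (c * y ^ 2 - x * (a * V ^ 2 - 2 * H * V))) + s * b * (c * y - m * x * V), ?_⟩
  linear_combination (l * b * (a * V ^ 2 - 2 * H * V) - m * s * b * V) * hx +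
    (-(l * b * c) * (a * V - H + m * y) + m * s * b * c) * hy

namespace zetaC

lemma ne_zero (n : ℕ) : zetaC n ≠ 0 := Complex.exp_ne_zero _

lemma isPrimitiveRoot {n : ℕ} (hn : n ≠ 0) : IsPrimitiveRoot (zetaC n) n :=
  Complex.isPrimitiveRoot_exp n hn

lemma zpow_eq_zpow_of_modEq {n : ℕ} (hn : n ≠ 0) {m m' : ℤ} (h : m ≡ m' [ZMOD n]) :
    zetaC n ^ m = zetaC n ^ m' := by
  have hone : zetaC n ^ (m' - m) = 1 := ((isPrimitiveRoot hn).zpow_eq_one_iff_dvd _).mpr h.dvd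
  rw [← sub_add_cancel m' m, zpow_add₀ (ne_zero n), hone, one_mul]

lemma mul_zpow_mul {m n : ℕ} (hm : m ≠ 0) (hn : n ≠ 0) (k : ℤ) :
    zetaC (m * n) ^ ((m : ℤ) * k) = zetaC n ^ k := by
  unfold zetaC
  rw [← Complex.exp_int_mul, ← Complex.exp_int_mul]
  congr 1
  have : (m : ℂ) ≠ 0 := Nat.cast_ne_zero.mpr hm
  have : (n : ℂ) ≠ 0 := Nat.cast_ne_zero.mpr hn
  push_cast
  field_simp

lemma sq_zpow_mul {p : ℕ} (hp : p ≠ 0) (k : ℤ) : zetaC (p ^ 2) ^ ((p : ℤ) * k) = zetaC p ^ k := by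
  rw [sq, mul_zpow_mul hp hp]

lemma sum_range_zpow_pow {n : ℕ} (hn : n ≠ 0) (t : ℤ) :
    ∑ s ∈ range n, (zetaC n ^ t) ^ s = if (t : ZMod n) = 0 then (n : ℂ) else 0 := by
  have hroot := isPrimitiveRoot hn
  have hone : zetaC n ^ t = 1 ↔ (t : ZMod n) = 0 := by
    rw [ZMod.intCast_zmod_eq_zero_iff_dvd, hroot.zpow_eq_one_iff_dvd]
  by_cases ht : (t : ZMod n) = 0
  · simp [ht, hone.mpr ht]
  · rw [if_neg ht, geom_sum_eq (mt hone.mp ht), ← zpow_natCast, ← zpow_mul, mul_comm, zpow_mul,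
      zpow_natCast, hroot.pow_eq_one, one_zpow, sub_self, zero_div]

end zetaC

section etaP

variable {p : ℕ} [NeZero p] [Fact p.Prime]

lemma etaP_eq_zpow (l : ℤ) (h : ZMod p) (s : ℤ) {a : ℤ} (ha : ¬ (p : ℤ) ∣ a) (b : ℤ) :
    etaP p l h s a b =
      zetaC (p ^ 2) ^ (l * a * b * (((a : ZMod p)⁻¹ * h).val : ℤ) ^ 2 -
        (2 * l * h.val + p * s) * b * (((a : ZMod p)⁻¹ * h).val : ℤ)) := by
  have hau : (a : ZMod p) ≠ 0 := by rwa [Ne, ZMod.intCast_zmod_eq_zero_iff_dvd]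
  have hsol : ∀ z : ZMod p, a • z = h ↔ z = (a : ZMod p)⁻¹ * h := fun z => by
    rw [zsmul_eq_mul, eq_inv_mul_iff_mul_eq₀ hau]
  simp only [etaP, hsol, sum_ite_eq', mem_univ, if_true]

lemma etaP_eq_zpow_of_mul_modEq_one (l : ℤ) (h : ZMod p) (s : ℤ) {a c : ℤ} (ha : ¬ (p : ℤ) ∣ a)
    (hac : a * c ≡ 1 [ZMOD (p : ℤ) ^ 2]) (b : ℤ) :
    etaP p l h s a b = zetaC (p ^ 2) ^ (-(l * h.val ^ 2 + p * s * h.val) * (b * c)) := by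
  have hau : (a : ZMod p) ≠ 0 := by rwa [Ne, ZMod.intCast_zmod_eq_zero_iff_dvd]
  have hV : a * (((a : ZMod p)⁻¹ * h).val : ℤ) ≡ h.val [ZMOD p] := by
    rw [← ZMod.intCast_eq_intCast_iff]
    push_cast
    rw [ZMod.natCast_zmod_val, ZMod.natCast_zmod_val, mul_inv_cancel_left₀ hau]
  rw [etaP_eq_zpow l h s ha b]
  exact zetaC.zpow_eq_zpow_of_modEq (pow_ne_zero 2 (NeZero.ne p))
    (by exact_mod_cast etaExponent_modEq hac hV)

lemma prod_etaP_eq {n : ℕ} (l : ℤ) (h : ZMod p) (s : ℕ) {a c : Fin n → ℤ}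
    (ha : ∀ j, ¬ (p : ℤ) ∣ a j) (hc : ∀ j, a j * c j ≡ 1 [ZMOD (p : ℤ) ^ 2]) (b : Fin n → ℤ) :
    ∏ j, etaP p l h s (a j) (b j) =
      zetaC (p ^ 2) ^ (-(l * h.val ^ 2 * ∑ j, b j * c j)) *
        (zetaC p ^ (-(h.val * ∑ j, b j * c j))) ^ s := by
  simp only [etaP_eq_zpow_of_mul_modEq_one l h s (ha _) (hc _),
    prod_zpow_eq_zpow_sum₀ (zetaC.ne_zero _), ← mul_sum]
  rw [← zetaC.sq_zpow_mul (NeZero.ne p), ← zpow_natCast, ← zpow_mul, ← zpow_add₀ (zetaC.ne_zero _)]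
  ring_nf

lemma sum_prod_etaP_eq {n : ℕ} (l : ℤ) (h : ZMod p) {a c : Fin n → ℤ}
    (ha : ∀ j, ¬ (p : ℤ) ∣ a j) (hc : ∀ j, a j * c j ≡ 1 [ZMOD (p : ℤ) ^ 2]) (b : Fin n → ℤ) :
    ∑ s ∈ range p, ∏ j, etaP p l h s (a j) (b j) =
      zetaC (p ^ 2) ^ (-(l * h.val ^ 2 * ∑ j, b j * c j)) *
        if h * ((∑ j, b j * c j : ℤ) : ZMod p) = 0 then (p : ℂ) else 0 := by
  simp only [prod_etaP_eq l h _ ha hc b, ← mul_sum, zetaC.sum_range_zpow_pow (NeZero.ne p)]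
  push_cast
  simp only [ZMod.natCast_zmod_val, neg_eq_zero]

end etaP

lemma sum_zmod_val_eq_sum_range {M : Type*} [AddCommMonoid M] {p : ℕ} [NeZero p] (f : ℕ → M) :
    ∑ h : ZMod p, f h.val = ∑ k ∈ range p, f k :=
  sum_nbij' (fun h => h.val) (fun k => (k : ZMod p))
    (fun h _ => mem_range.mpr (ZMod.val_lt h)) (fun _ _ => mem_univ _)
    (fun h _ => ZMod.natCast_zmod_val h) (fun _ hk => ZMod.val_cast_of_lt (mem_range.mp hk))
    (fun _ _ => rfl)

theorem statement17_general (p : ℕ) [NeZero p] (hp : p.Prime) (l : ℤ)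
    (n : ℕ) (a b c : Fin n → ℤ)
    (ha : ∀ j, ¬ (p : ℤ) ∣ a j) (hc : ∀ j, a j * c j ≡ 1 [ZMOD ((p : ℤ) ^ 2)]) :
    (¬ (p : ℤ) ∣ (∑ j, b j * c j) →
      (∑ h : ZMod p, ∑ s ∈ Finset.range p, ∏ j, etaP p l h (s : ℤ) (a j) (b j)) = (p : ℂ)) ∧
    (∀ r : ℤ, (∑ j, b j * c j) = r * p →
      (∑ h : ZMod p, ∑ s ∈ Finset.range p, ∏ j, etaP p l h (s : ℤ) (a j) (b j)) =
        (p : ℂ) * SP p (-(l * r))) := by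
  have := Fact.mk hp
  simp only [sum_prod_etaP_eq l _ ha hc b]
  constructor
  · intro hB
    rw [← ZMod.intCast_zmod_eq_zero_iff_dvd] at hB
    rw [sum_eq_single 0 (fun h _ hh => by rw [if_neg (mul_ne_zero hh hB), mul_zero])
      (fun h => absurd (mem_univ 0) h)]
    simp
  · intro r hr
    have hB : ((∑ j, b j * c j : ℤ) : ZMod p) = 0 := by simp [hr]
    simp only [hB, mul_zero, if_true]
    rw [SP, mul_sum,
      ← sum_zmod_val_eq_sum_range (fun k => (p : ℂ) * zetaC p ^ (-(l * r) * (k : ℤ) ^ 2))]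
    refine sum_congr rfl fun h _ => ?_
    rw [hr, show -(l * h.val ^ 2 * (r * p)) = (p : ℤ) * (-(l * r) * h.val ^ 2) by ring,
      zetaC.sq_zpow_mul (NeZero.ne p), mul_comm]

theorem statement17 (p : ℕ) [NeZero p] (hp : p.Prime) (hp2 : p ≠ 2) (l : ℤ)
    (n : ℕ) (hn : 1 ≤ n) (a b c : Fin n → ℤ)
    (ha : ∀ j, ¬ (p : ℤ) ∣ a j) (hc : ∀ j, a j * c j ≡ 1 [ZMOD ((p : ℤ) ^ 2)]) :
    (¬ (p : ℤ) ∣ (∑ j, b j * c j) →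
      (∑ h : ZMod p, ∑ s ∈ Finset.range p, ∏ j, etaP p l h (s : ℤ) (a j) (b j)) = (p : ℂ)) ∧
    (∀ r : ℤ, (∑ j, b j * c j) = r * p →
      (∑ h : ZMod p, ∑ s ∈ Finset.range p, ∏ j, etaP p l h (s : ℤ) (a j) (b j)) =
        (p : ℂ) * SP p (-(l * r))) :=
  statement17_general p hp l n a b c ha hc
end
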